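/- Let q be a prime power. For every function f : F_q^2 → ℂ one has ‖M_2 f‖_{ℓ^2(P^1(F_q))} ≤ √2 · q^{1/2} · ‖f‖_{ℓ^2(F_q^2)}. -/

import Mathlib

/-!
`K` plays the role of the finite field `F_q` with `q = Fintype.card K` elements
(the cardinality of a finite field is automatically a prime power).
The Heisenberg group `H₁(F_q)` is identified with `K × K × K`.
The projective line `P¹(F_q)` is identified with `Option K`, where `some m`
corresponds to the direction class `[1 : m]` and `none` to `[0 : 1]`
(every class has a unique such normal form).
-/

noncomputable section

open Finset

/-- Representative direction vector of a projective class. -/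
def dirVec {K : Type*} [Field K] : Option K → K × K
  | some m => (1, m)
  | none => (0, 1)

/-- The point of the horizontal line through `p = (x₀, y₀, t₀)` with direction
vector `v = (a, b)` corresponding to the parameter `s`, namely
`(x₀ + s a, y₀ + s b, t₀ + s (x₀ b - y₀ a))`. -/
def hPoint {K : Type*} [Field K] (p : K × K × K) (v : K × K) (s : K) : K × K × K :=
  (p.1 + s * v.1, p.2.1 + s * v.2, p.2.2 + s * (p.1 * v.2 - p.2.1 * v.1))

/-- Sum of `|F|` along the horizontal line through `p` with direction vector `v`. -/
def lineSumH1 {K : Type*} [Field K] [Fintype K] (Fc : K × K × K → ℂ)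
    (p : K × K × K) (v : K × K) : ℝ :=
  ∑ s : K, ‖Fc (hPoint p v s)‖

/-- The horizontal Kakeya maximal function `M_{H₁} F` on `P¹(F_q) ≃ Option K`:
the maximum over all base points `p` of the sum of `|F|` along the horizontal
line through `p` in the given direction. -/
def MH1 {K : Type*} [Field K] [Fintype K] (Fc : K × K × K → ℂ) (d : Option K) : ℝ :=
  Finset.univ.sup' ⟨((0 : K), (0 : K), (0 : K)), Finset.mem_univ _⟩
    fun p => lineSumH1 Fc p (dirVec d)

/-- `ℓ^r` norm of a complex-valued function on a finite set. -/
def lpNormC {X : Type*} [Fintype X] (r : ℝ) (g : X → ℂ) : ℝ :=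
  (∑ x, ‖g x‖ ^ r) ^ (1 / r)

/-- `ℓ^r` norm of a real-valued function on a finite set. -/
def lpNormR {X : Type*} [Fintype X] (r : ℝ) (g : X → ℝ) : ℝ :=
  (∑ x, |g x| ^ r) ^ (1 / r)

/-- Sum of `|f|` along the affine line `{w + s v : s ∈ F_q}` in `F_q²`. -/
def lineSum2 {K : Type*} [Field K] [Fintype K] (f : K × K → ℂ) (w v : K × K) : ℝ :=
  ∑ s : K, ‖f (w.1 + s * v.1, w.2 + s * v.2)‖

/-- The planar Kakeya maximal function `M₂ f` on `P¹(F_q) ≃ Option K`, for a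
complex-valued function on `F_q²`. -/
def M2 {K : Type*} [Field K] [Fintype K] (f : K × K → ℂ) (d : Option K) : ℝ :=
  Finset.univ.sup' ⟨((0 : K), (0 : K)), Finset.mem_univ _⟩
    fun w => lineSum2 f w (dirVec d)

/-!
For each direction `d` pick a line `ℓ_d` realising `M₂ f d`. Lines in distinct directions meet in
at most one point, so the indicators of the `q + 1` chosen lines are almost orthogonal:
`‖∑_d c_d 1_{ℓ_d}‖₂² ≤ (q + 1 + q - 1) ∑_d c_d²`. Since `∑_d (M₂ f d)² = ⟪|f|, ∑_d M₂ f d · 1_{ℓ_d}⟫`,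
Cauchy–Schwarz gives `‖M₂ f‖₂² ≤ ‖f‖₂ · √(2q) · ‖M₂ f‖₂`.
-/

section AlmostDisjoint

variable {ι X : Type*} [Fintype ι] [Fintype X] [DecidableEq X]

theorem sum_sq_sum_indicator_eq (L : ι → Finset X) (c : ι → ℝ) :
    ∑ x, (∑ i, if x ∈ L i then c i else 0) ^ 2 = ∑ i, ∑ j, c i * c j * #(L i ∩ L j) := by
  simp only [sq, sum_mul_sum]
  rw [sum_comm]
  refine sum_congr rfl fun i _ => ?_
  rw [sum_comm]
  refine sum_congr rfl fun j _ => ?_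
  have hprod : ∀ x, (if x ∈ L i then c i else 0) * (if x ∈ L j then c j else 0)
      = if x ∈ L i ∩ L j then c i * c j else 0 := fun x => by
    by_cases hi : x ∈ L i <;> by_cases hj : x ∈ L j <;> simp [hi, hj]
  simp only [hprod, sum_ite_mem, univ_inter, sum_const, nsmul_eq_mul]
  ring

theorem sum_sq_sum_indicator_le [Nonempty ι] (L : ι → Finset X) {c : ι → ℝ} {q : ℕ}
    (hc : ∀ i, 0 ≤ c i) (hcard : ∀ i, #(L i) ≤ q)
    (hinter : Pairwise fun i j => #(L i ∩ L j) ≤ 1) :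
    ∑ x, (∑ i, if x ∈ L i then c i else 0) ^ 2 ≤
      (Fintype.card ι + q - 1 : ℝ) * ∑ i, c i ^ 2 := by
  classical
  have hpair : ∀ i j, (#(L i ∩ L j) : ℝ) ≤ 1 + if i = j then (q : ℝ) - 1 else 0 := by
    intro i j
    by_cases hij : i = j
    · subst hij
      simp only [inter_self, if_true]
      linarith [(Nat.cast_le (α := ℝ)).2 (hcard i)]
    · simp only [hij, if_false, add_zero]
      exact_mod_cast hinter hij
  calc ∑ x, (∑ i, if x ∈ L i then c i else 0) ^ 2
      = ∑ i, ∑ j, c i * c j * #(L i ∩ L j) := sum_sq_sum_indicator_eq L c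
    _ ≤ ∑ i, ∑ j, c i * c j * (1 + if i = j then (q : ℝ) - 1 else 0) :=
        sum_le_sum fun i _ => sum_le_sum fun j _ =>
          mul_le_mul_of_nonneg_left (hpair i j) (mul_nonneg (hc i) (hc j))
    _ = (∑ i, c i) ^ 2 + (q - 1) * ∑ i, c i ^ 2 := by
        simp only [mul_add, mul_one, mul_ite, mul_zero, sum_add_distrib, sum_ite_eq, mem_univ,
          if_true]
        rw [sq, sum_mul_sum, mul_sum]
        congr 1
        exact sum_congr rfl fun i _ => by ring
    _ ≤ Fintype.card ι * ∑ i, c i ^ 2 + (q - 1) * ∑ i, c i ^ 2 := by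
        gcongr
        exact sq_sum_le_card_mul_sum_sq
    _ = (Fintype.card ι + q - 1 : ℝ) * ∑ i, c i ^ 2 := by ring

theorem sum_sq_sum_le_of_card_inter_le_one [Nonempty ι] (L : ι → Finset X) {A : X → ℝ} {q : ℕ}
    (hA : ∀ x, 0 ≤ A x) (hcard : ∀ i, #(L i) ≤ q)
    (hinter : Pairwise fun i j => #(L i ∩ L j) ≤ 1) :
    ∑ i, (∑ x ∈ L i, A x) ^ 2 ≤ (Fintype.card ι + q - 1 : ℝ) * ∑ x, A x ^ 2 := by
  set M : ι → ℝ := fun i => ∑ x ∈ L i, A x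
  set C : ℝ := Fintype.card ι + q - 1
  set S := ∑ i, M i ^ 2
  set T := ∑ x, A x ^ 2
  have hdual : S = ∑ x, A x * ∑ i, if x ∈ L i then M i else 0 := by
    simp only [S, mul_sum, mul_ite, mul_zero]
    rw [sum_comm]
    refine sum_congr rfl fun i _ => ?_
    rw [sum_ite_mem, univ_inter, ← sum_mul, sq]
  have hC : 0 ≤ C := by
    have : (1 : ℝ) ≤ Fintype.card ι := by exact_mod_cast Fintype.card_pos
    simp only [C]
    linarith [q.cast_nonneg (α := ℝ)]
  have hS : 0 ≤ S := by positivity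
  have hCS : S ^ 2 ≤ T * (C * S) := calc
    S ^ 2 ≤ T * ∑ x, (∑ i, if x ∈ L i then M i else 0) ^ 2 := by
      rw [hdual]
      exact sum_mul_sq_le_sq_mul_sq _ _ _
    _ ≤ T * (C * S) := by
      gcongr
      exact sum_sq_sum_indicator_le L (fun i => sum_nonneg fun x _ => hA x) hcard hinter
  rcases hS.eq_or_lt with hS0 | hSpos
  · rw [← hS0]
    exact mul_nonneg hC (by positivity)
  · exact le_of_mul_le_mul_right (by linarith) hSpos

end AlmostDisjoint

section AffineLines

variable {K : Type*} [Field K]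

theorem dirVec_ne_zero (d : Option K) : dirVec d ≠ 0 := by
  cases d <;> simp [dirVec]

theorem dirVec_cross_ne_zero {d d' : Option K} (h : d ≠ d') :
    (dirVec d).1 * (dirVec d').2 - (dirVec d).2 * (dirVec d').1 ≠ 0 := by
  cases d <;> cases d' <;> simp_all [dirVec, sub_eq_zero, eq_comm]

theorem eq_zero_of_smul_eq_smul {v v' : K × K} (hvv' : v.1 * v'.2 - v.2 * v'.1 ≠ 0) {a b : K}
    (h : a • v = b • v') : a = 0 := by
  obtain ⟨h1, h2⟩ := Prod.ext_iff.1 h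
  simp only [Prod.smul_fst, Prod.smul_snd, smul_eq_mul] at h1 h2
  have : a * (v.1 * v'.2 - v.2 * v'.1) = 0 := by linear_combination v'.2 * h1 - v'.1 * h2
  exact (mul_eq_zero.1 this).resolve_right hvv'

variable [Fintype K] [DecidableEq K]

def affineLine (w v : K × K) : Finset (K × K) := univ.image fun s : K => w + s • v

theorem card_affineLine {v : K × K} (hv : v ≠ 0) (w : K × K) :
    #(affineLine w v) = Fintype.card K :=
  card_image_of_injective univ ((add_right_injective w).comp (smul_left_injective K hv))

theorem card_inter_affineLine_le_one {v v' : K × K} (hvv' : v.1 * v'.2 - v.2 * v'.1 ≠ 0)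
    (w w' : K × K) : #(affineLine w v ∩ affineLine w' v') ≤ 1 := by
  refine card_le_one.2 fun x hx y hy => ?_
  simp only [affineLine, mem_inter, mem_image, mem_univ, true_and] at hx hy
  obtain ⟨⟨s, rfl⟩, t, hxt⟩ := hx
  obtain ⟨⟨s', rfl⟩, t', hyt⟩ := hy
  have : (s - s') • v = (t - t') • v' := by
    rw [sub_smul, sub_smul, ← add_sub_add_left_eq_sub _ _ w, ← hxt, ← hyt,
      add_sub_add_left_eq_sub]
  rw [sub_eq_zero.1 (eq_zero_of_smul_eq_smul hvv' this)]

theorem lineSum2_eq_sum_affineLine (f : K × K → ℂ) (w : K × K) {v : K × K} (hv : v ≠ 0) :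
    lineSum2 f w v = ∑ x ∈ affineLine w v, ‖f x‖ := by
  rw [affineLine, sum_image fun s _ t _ h => smul_left_injective K hv (add_right_injective w h)]
  rfl

end AffineLines

theorem exists_M2_eq_lineSum2 {K : Type*} [Field K] [Fintype K] (f : K × K → ℂ) (d : Option K) :
    ∃ w, M2 f d = lineSum2 f w (dirVec d) := by
  obtain ⟨w, -, hw⟩ := Finset.exists_mem_eq_sup' _ (fun w => lineSum2 f w (dirVec d))
  exact ⟨w, hw⟩

theorem lpNormR_two {X : Type*} [Fintype X] (g : X → ℝ) : lpNormR 2 g = √(∑ x, g x ^ 2) := by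
  simp only [lpNormR, Real.rpow_two, sq_abs, Real.sqrt_eq_rpow]

theorem lpNormC_two {X : Type*} [Fintype X] (g : X → ℂ) : lpNormC 2 g = √(∑ x, ‖g x‖ ^ 2) := by
  simp only [lpNormC, Real.rpow_two, Real.sqrt_eq_rpow]

/-- planar Kakeya `ℓ²` bound.  For every `f : F_q² → ℂ`,
`‖M₂ f‖_{ℓ²(P¹(F_q))} ≤ √2 · q^{1/2} · ‖f‖_{ℓ²(F_q²)}`. -/
theorem stmt_1 {K : Type*} [Field K] [Fintype K] (f : K × K → ℂ) :
    lpNormR 2 (M2 f) ≤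
      Real.sqrt 2 * (Fintype.card K : ℝ) ^ ((1 : ℝ) / 2) * lpNormC 2 f := by
  classical
  choose w hw using exists_M2_eq_lineSum2 f
  have hM : ∀ d, M2 f d = ∑ x ∈ affineLine (w d) (dirVec d), ‖f x‖ := fun d =>
    (hw d).trans (lineSum2_eq_sum_affineLine f (w d) (dirVec_ne_zero d))
  have hbound := sum_sq_sum_le_of_card_inter_le_one (fun d => affineLine (w d) (dirVec d))
    (fun x => norm_nonneg (f x)) (fun d => (card_affineLine (dirVec_ne_zero d) (w d)).le)
    (fun d d' hdd' => card_inter_affineLine_le_one (dirVec_cross_ne_zero hdd') (w d) (w d'))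
  rw [lpNormR_two, lpNormC_two, ← Real.sqrt_eq_rpow, ← Real.sqrt_mul zero_le_two,
    ← Real.sqrt_mul (by positivity)]
  refine Real.sqrt_le_sqrt ?_
  simp only [hM]
  convert hbound using 1
  rw [Fintype.card_option]
  push_cast
  ring
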